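/- Let α₁ be algebraic over k(x) and a₁ ∈ k(x). Then H(a₁·α₁) ≤ H(α₁) + Deg(α₁)·H(a₁). -/

import Mathlib

/-!
Write `P = ∑ pᵢ Tⁱ` with `d = deg P`. Since `c·(a₁α₁) = b·α₁`, the element `a₁α₁` is a root of
`Q₀ = ∑ pᵢ b^(d-i) cⁱ Tⁱ`, whose coefficients have degree at most `H(P) + d·max(deg b, deg c)`.
For minimality, scale the roots of an annihilator `R` of `a₁α₁` back by `c/b`: the result
annihilates `α₁`, so it is a multiple of `P`; scaling once more by `b/c` turns it into
`(bc)^(deg R)·R`, which is therefore a multiple of `Q₀`. By Gauss's lemma the primitive part of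
`Q₀` divides `R`, and passing to the primitive part only lowers the degrees of the coefficients.
When `b = 0` the minimal polynomial is `T`.
-/

open Polynomial

noncomputable section

variable {k : Type*} [Field k] {σ : Type*}

/-- `P ∈ k[x][T]` is (a) minimal polynomial of the element `α` of a field extension `L`
of `k(x)`: it is nonzero, annihilates `α`, and generates the ideal of annihilators. -/
def IsMinPolyE {L : Type*} [Field L] [Algebra (MvPolynomial σ k) L]
    (P : Polynomial (MvPolynomial σ k)) (α : L) : Prop :=
  P ≠ 0 ∧ Polynomial.aeval α P = 0 ∧
    ∀ Q : Polynomial (MvPolynomial σ k), Polynomial.aeval α Q = 0 → P ∣ Q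

/-- The height of `P ∈ k[x][T]`: the maximum of the total degrees of its coefficients. -/
def heightP (P : Polynomial (MvPolynomial σ k)) : ℕ :=
  (Finset.range (P.natDegree + 1)).sup fun i => (P.coeff i).totalDegree

namespace Polynomial

section CommSemiring

variable {R : Type*} [CommSemiring R]

/-- `u ^ natDegree p * p (v T / u)`, whose roots are those of `p` multiplied by `u / v`. -/
def scaleRootsDiv (p : R[X]) (u v : R) : R[X] :=
  (p.scaleRoots u).comp (C v * X)

@[simp]
theorem coeff_scaleRootsDiv (p : R[X]) (u v : R) (i : ℕ) :
    (p.scaleRootsDiv u v).coeff i = p.coeff i * u ^ (p.natDegree - i) * v ^ i := by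
  simp [scaleRootsDiv]

theorem aeval_scaleRootsDiv_eq_zero {A : Type*} [CommSemiring A] [Algebra R A] {p : R[X]}
    {u v : R} {x y : A} (hxy : algebraMap R A v * y = algebraMap R A u * x)
    (hx : aeval x p = 0) : aeval y (p.scaleRootsDiv u v) = 0 := by
  rw [scaleRootsDiv, aeval_comp, map_mul, aeval_C, aeval_X, hxy]
  exact scaleRoots_aeval_eq_zero hx

end CommSemiring

section Domain

variable {R : Type*} [CommRing R] [IsDomain R]

theorem scaleRootsDiv_ne_zero {p : R[X]} (hp : p ≠ 0) (u : R) {v : R} (hv : v ≠ 0) :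
    p.scaleRootsDiv u v ≠ 0 := by
  rw [scaleRootsDiv, Ne, comp_C_mul_X_eq_zero_iff (mem_nonZeroDivisors_of_ne_zero hv)]
  exact scaleRoots_ne_zero hp u

theorem natDegree_scaleRootsDiv (p : R[X]) (u : R) {v : R} (hv : v ≠ 0) :
    (p.scaleRootsDiv u v).natDegree = p.natDegree := by
  rw [scaleRootsDiv, natDegree_comp, natDegree_scaleRoots, natDegree_C_mul_X v hv, mul_one]

theorem scaleRootsDiv_dvd {p q : R[X]} (hpq : p ∣ q) (u v : R) :
    p.scaleRootsDiv u v ∣ q.scaleRootsDiv u v := by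
  obtain ⟨s, rfl⟩ := hpq
  rw [scaleRootsDiv, scaleRootsDiv, mul_scaleRoots_of_noZeroDivisors, mul_comp]
  exact dvd_mul_right _ _

theorem scaleRootsDiv_scaleRootsDiv (p : R[X]) {u : R} (hu : u ≠ 0) (v : R) :
    (p.scaleRootsDiv v u).scaleRootsDiv u v = C ((u * v) ^ p.natDegree) * p := by
  ext i
  rw [coeff_scaleRootsDiv, natDegree_scaleRootsDiv p v hu, coeff_scaleRootsDiv, coeff_C_mul]
  rcases le_or_gt i p.natDegree with hi | hi
  · have hsplit (w : R) : w ^ (p.natDegree - i) * w ^ i = w ^ p.natDegree := by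
      rw [← pow_add, Nat.sub_add_cancel hi]
    calc p.coeff i * v ^ (p.natDegree - i) * u ^ i * u ^ (p.natDegree - i) * v ^ i
        = (u ^ (p.natDegree - i) * u ^ i) * (v ^ (p.natDegree - i) * v ^ i) * p.coeff i := by
          ring
      _ = (u * v) ^ p.natDegree * p.coeff i := by rw [hsplit, hsplit, mul_pow]
  · simp [coeff_eq_zero_of_natDegree_lt hi]

variable [NormalizedGCDMonoid R]

theorem IsPrimitive.dvd_of_dvd_C_mul {p q : R[X]} (hp : p.IsPrimitive) {a : R} (ha : a ≠ 0)
    (h : p ∣ C a * q) : p ∣ q := by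
  rcases eq_or_ne q 0 with rfl | hq
  · exact dvd_zero p
  have haq : C a * q ≠ 0 := mul_ne_zero (C_ne_zero.2 ha) hq
  have hpq : p ∣ (C a).primPart * q.primPart :=
    (associated_primPart_mul haq).dvd_iff_dvd_right.1 ((hp.dvd_primPart_iff_dvd haq).2 h)
  exact ((isUnit_primPart_C a).dvd_mul_left.1 hpq).trans q.primPart_dvd

theorem primPart_scaleRootsDiv_dvd {A : Type*} [CommRing A] [Algebra R A] {P Q : R[X]}
    {α β : A} {u v : R} (hu : u ≠ 0) (hv : v ≠ 0)
    (hαβ : algebraMap R A v * β = algebraMap R A u * α)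
    (hP : ∀ S : R[X], aeval α S = 0 → P ∣ S) (hQ : aeval β Q = 0) :
    (P.scaleRootsDiv u v).primPart ∣ Q := by
  have hPQ : P ∣ Q.scaleRootsDiv v u := hP _ (aeval_scaleRootsDiv_eq_zero hαβ.symm hQ)
  have hdvd : P.scaleRootsDiv u v ∣ C ((u * v) ^ Q.natDegree) * Q := by
    simpa only [scaleRootsDiv_scaleRootsDiv Q hu v] using scaleRootsDiv_dvd hPQ u v
  exact (isPrimitive_primPart _).dvd_of_dvd_C_mul (pow_ne_zero _ (mul_ne_zero hu hv))
    ((primPart_dvd _).trans hdvd)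

end Domain

end Polynomial

theorem IsMinPolyE.primPart_scaleRootsDiv [NormalizedGCDMonoid (MvPolynomial σ k)]
    {L : Type*} [Field L] [Algebra (MvPolynomial σ k) L]
    (hinj : Function.Injective (algebraMap (MvPolynomial σ k) L))
    {P : Polynomial (MvPolynomial σ k)} {α β : L} (hP : IsMinPolyE P α)
    {u v : MvPolynomial σ k} (hu : u ≠ 0) (hv : v ≠ 0)
    (hαβ : algebraMap _ L v * β = algebraMap _ L u * α) :
    IsMinPolyE (P.scaleRootsDiv u v).primPart β :=
  ⟨primPart_ne_zero _,
    eval₂_primPart_eq_zero hinj (scaleRootsDiv_ne_zero hP.1 u hv)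
      (aeval_scaleRootsDiv_eq_zero hαβ hP.2.1),
    fun _ hQ => primPart_scaleRootsDiv_dvd hu hv hαβ hP.2.2 hQ⟩

theorem isMinPolyE_X_zero {L : Type*} [Field L] [Algebra (MvPolynomial σ k) L]
    (hinj : Function.Injective (algebraMap (MvPolynomial σ k) L)) :
    IsMinPolyE (X : Polynomial (MvPolynomial σ k)) (0 : L) :=
  ⟨X_ne_zero, aeval_X 0, fun Q hQ => X_dvd_iff.2 <|
    hinj <| by rw [coeff_zero_eq_aeval_zero', hQ, map_zero]⟩

theorem heightP_le_iff {P : Polynomial (MvPolynomial σ k)} {m : ℕ} :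
    heightP P ≤ m ↔ ∀ i, (P.coeff i).totalDegree ≤ m := by
  rw [heightP, Finset.sup_le_iff]
  refine ⟨fun h i => ?_, fun h i _ => h i⟩
  rcases le_or_gt i P.natDegree with hi | hi
  · exact h i (Finset.mem_range_succ_iff.2 hi)
  · simp [coeff_eq_zero_of_natDegree_lt hi]

theorem totalDegree_coeff_le_heightP (P : Polynomial (MvPolynomial σ k)) (i : ℕ) :
    (P.coeff i).totalDegree ≤ heightP P :=
  heightP_le_iff.1 le_rfl i

theorem heightP_X : heightP (X : Polynomial (MvPolynomial σ k)) = 0 := by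
  refine Nat.le_zero.1 (heightP_le_iff.2 fun i => ?_)
  rw [coeff_X]
  split_ifs <;> simp

theorem heightP_le_heightP_C_mul (P : Polynomial (MvPolynomial σ k)) {a : MvPolynomial σ k}
    (ha : a ≠ 0) : heightP P ≤ heightP (C a * P) := by
  refine heightP_le_iff.2 fun i => ?_
  rcases eq_or_ne (P.coeff i) 0 with h | h
  · simp [h]
  · refine le_trans ?_ (totalDegree_coeff_le_heightP (C a * P) i)
    rw [coeff_C_mul]
    exact MvPolynomial.totalDegree_le_of_dvd_of_isDomain (dvd_mul_left _ _) (mul_ne_zero ha h)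

theorem heightP_primPart_le [NormalizedGCDMonoid (MvPolynomial σ k)]
    (P : Polynomial (MvPolynomial σ k)) : heightP P.primPart ≤ heightP P := by
  rcases eq_or_ne P 0 with rfl | hP
  · simp [heightP]
  · conv_rhs => rw [P.eq_C_content_mul_primPart]
    exact heightP_le_heightP_C_mul _ (mt content_eq_zero_iff.1 hP)

theorem heightP_scaleRootsDiv_le (P : Polynomial (MvPolynomial σ k)) (u v : MvPolynomial σ k) :
    heightP (P.scaleRootsDiv u v) ≤
      heightP P + P.natDegree * max u.totalDegree v.totalDegree := by
  refine heightP_le_iff.2 fun i => ?_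
  rcases le_or_gt i P.natDegree with hi | hi
  · rw [coeff_scaleRootsDiv]
    calc _ ≤ (P.coeff i * u ^ (P.natDegree - i)).totalDegree + (v ^ i).totalDegree :=
          MvPolynomial.totalDegree_mul _ _
      _ ≤ (P.coeff i).totalDegree + (P.natDegree - i) * u.totalDegree + i * v.totalDegree := by
        grw [MvPolynomial.totalDegree_mul, MvPolynomial.totalDegree_pow,
          MvPolynomial.totalDegree_pow]
      _ ≤ heightP P + (P.natDegree - i) * max u.totalDegree v.totalDegree +
          i * max u.totalDegree v.totalDegree := by
        gcongr
        exacts [totalDegree_coeff_le_heightP P i, le_max_left _ _, le_max_right _ _]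
      _ = heightP P + P.natDegree * max u.totalDegree v.totalDegree := by
        rw [add_assoc, ← add_mul, Nat.sub_add_cancel hi]
  · simp [coeff_eq_zero_of_natDegree_lt hi]

theorem height_mul_rational_le_general {n : ℕ} {L : Type*} [Field L]
    [Algebra (MvPolynomial (Fin n) k) L]
    (hinj : Function.Injective (algebraMap (MvPolynomial (Fin n) k) L))
    (α₁ : L) (P : Polynomial (MvPolynomial (Fin n) k)) (hP : IsMinPolyE P α₁)
    (a₁ : L) (b c : MvPolynomial (Fin n) k) (hc : c ≠ 0)
    (ha₁ : a₁ * algebraMap (MvPolynomial (Fin n) k) L c =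
      algebraMap (MvPolynomial (Fin n) k) L b) :
    ∃ Q : Polynomial (MvPolynomial (Fin n) k), IsMinPolyE Q (a₁ * α₁) ∧
      heightP Q ≤ heightP P + P.natDegree * max b.totalDegree c.totalDegree := by
  obtain ⟨_⟩ : Nonempty (NormalizedGCDMonoid (MvPolynomial (Fin n) k)) := inferInstance
  rcases eq_or_ne b 0 with rfl | hb
  · have ha₁0 : a₁ = 0 := by simpa [(map_ne_zero_iff _ hinj).2 hc] using ha₁
    refine ⟨X, ?_, by simp [heightP_X]⟩
    rw [ha₁0, zero_mul]
    exact isMinPolyE_X_zero hinj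
  · refine ⟨_, hP.primPart_scaleRootsDiv hinj hb hc (by rw [← ha₁]; ring),
      (heightP_primPart_le _).trans (heightP_scaleRootsDiv_le P b c)⟩

/-- If `α₁` is algebraic over `k(x)` with minimal polynomial `P`, and
`a₁ = b/c ∈ k(x)` is a rational function written in lowest terms, then
`H(a₁ * α₁) ≤ H(α₁) + Deg(α₁) · H(a₁)`, where `H(a₁) = max (deg b) (deg c)`. -/
theorem height_mul_rational_le {n : ℕ} {L : Type*} [Field L]
    [Algebra (MvPolynomial (Fin n) k) L]
    (hinj : Function.Injective (algebraMap (MvPolynomial (Fin n) k) L))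
    (α₁ : L) (P : Polynomial (MvPolynomial (Fin n) k)) (hP : IsMinPolyE P α₁)
    (a₁ : L) (b c : MvPolynomial (Fin n) k) (hc : c ≠ 0) (hbc : IsRelPrime b c)
    (ha₁ : a₁ * algebraMap (MvPolynomial (Fin n) k) L c =
      algebraMap (MvPolynomial (Fin n) k) L b) :
    ∃ Q : Polynomial (MvPolynomial (Fin n) k), IsMinPolyE Q (a₁ * α₁) ∧
      heightP Q ≤ heightP P + P.natDegree * max b.totalDegree c.totalDegree :=
  height_mul_rational_le_general hinj α₁ P hP a₁ b c hc ha₁
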